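/- The fourth central moment μ₄ of the Pólya urn distribution with parameters n, a = x, b = 1−x, c = −min{x,1−x}/(n−1) satisfies μ₄ = O(n²) as n → ∞, uniformly in x ∈ [0,1]; i.e., there exists a constant K such that μ₄ ≤ K n² for all n > 1 and x ∈ [0,1]. -/

import Mathlib

/-- Generalized rising factorial with increment `h`: `x^(m,h) = x(x+h)···(x+(m-1)h)`. -/
noncomputable def rfac (x h : ℝ) (m : ℕ) : ℝ := ∏ i ∈ Finset.range m, (x + i * h)

/-- Pólya urn probability `p_{n,k}^{a,b,c}`. -/
noncomputable def polyaProb (a b c : ℝ) (n k : ℕ) : ℝ :=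
  (n.choose k : ℝ) * rfac a c k * rfac b c (n - k) / rfac (a + b) c n

/-- The operator `R_n(f;x)` with `c = -min{x,1-x}/(n-1)`. -/
noncomputable def Rop (n : ℕ) (f : ℝ → ℝ) (x : ℝ) : ℝ :=
  ∑ k ∈ Finset.range (n + 1),
    polyaProb x (1 - x) (-(min x (1 - x)) / ((n : ℝ) - 1)) n k * f ((k : ℝ) / n)

/-- Modulus of continuity of `f` on `[a,b]`. -/
noncomputable def modulus (f : ℝ → ℝ) (a b δ : ℝ) : ℝ :=
  sSup {d : ℝ | ∃ u ∈ Set.Icc a b, ∃ v ∈ Set.Icc a b, |u - v| ≤ δ ∧ d = |f u - f v|}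

/-!
The Pólya weights obey a Vandermonde identity for the rising factorials `rfac`, and absorbing
`k · C(n, k) = n · C(n - 1, k - 1)` turns it into the factorial moments
`∑ₖ p_k k(k-1)⋯(k-r+1) = n(n-1)⋯(n-r+1) · a^(r,c) / (a+b)^(r,c)` (the falling factorial
`y(y-1)⋯(y-r+1)` is `rfac y (-1) r`). Expanding `(k - nx)⁴` in falling factorials, with `c = -e`
and `s = x(1-x)`, gives the closed form of the hypergeometric law with population `1/e`:
`μ₄ (1-e)(1-2e)(1-3e) = n s (1-ne) (1 + e - 6ne(1-ne) + 3s(n - 2 - n²e + 6ne(1-ne)))`.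
Since `e(n-1) = min x (1-x) ≤ 1/2`, we have `ne ≤ 1` and, for `n ≥ 3`, `e ≤ 1/4`, whence
`μ₄ ≤ (3n²/4) / (3/32) = 8n²`. For `n = 2` the weights are nonnegative and `|k - nx| ≤ n`.
-/

open Finset

lemma rfac_zero (x h : ℝ) : rfac x h 0 = 1 := by simp [rfac]

lemma rfac_succ' (x h : ℝ) (m : ℕ) : rfac x h (m + 1) = x * rfac (x + h) h m := by
  rw [rfac, rfac, prod_range_succ']
  simp only [Nat.cast_zero, zero_mul, add_zero, Nat.cast_succ]
  rw [mul_comm]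
  congr 1
  exact prod_congr rfl fun i _ => by ring

lemma rfac_add (x h : ℝ) (m j : ℕ) : rfac x h (m + j) = rfac x h m * rfac (x + m * h) h j := by
  rw [rfac, rfac, rfac, prod_range_add]
  congr 1
  exact prod_congr rfl fun i _ => by push_cast; ring

lemma rfac_neg_one_eq_zero {n r : ℕ} (h : n < r) : rfac n (-1) r = 0 :=
  prod_eq_zero (mem_range.2 h) (by ring)

lemma sum_antidiagonal_choose_mul_rfac (h : ℝ) (N : ℕ) (a b : ℝ) :
    ∑ ij ∈ antidiagonal N, (N.choose ij.1 : ℝ) * (rfac a h ij.1 * rfac b h ij.2) =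
      rfac (a + b) h N := by
  induction N generalizing a b with
  | zero => simp [rfac_zero]
  | succ N ih =>
    rw [sum_antidiagonal_choose_succ_mul (fun i j => rfac a h i * rfac b h j)]
    have hleft :
        ∑ ij ∈ antidiagonal N, (N.choose ij.1 : ℝ) * (rfac a h ij.1 * rfac b h (ij.2 + 1)) =
          b * rfac (a + b + h) h N := by
      rw [add_assoc, ← ih, mul_sum]
      exact sum_congr rfl fun ij _ => by rw [rfac_succ']; ring
    have hright :
        ∑ ij ∈ antidiagonal N, (N.choose ij.2 : ℝ) * (rfac a h (ij.1 + 1) * rfac b h ij.2) =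
          a * rfac (a + b + h) h N := by
      rw [add_right_comm, ← ih, mul_sum]
      refine sum_congr rfl fun ij hij => ?_
      rw [rfac_succ', Nat.choose_symm_of_eq_add (mem_antidiagonal.1 hij).symm]
      ring
    rw [hleft, hright, rfac_succ']
    ring

lemma sum_choose_mul_rfac_mul_rfac (h a b : ℝ) (N : ℕ) :
    ∑ k ∈ range (N + 1), (N.choose k : ℝ) * rfac a h k * rfac b h (N - k) =
      rfac (a + b) h N := by
  rw [← sum_antidiagonal_choose_mul_rfac, Nat.sum_antidiagonal_eq_sum_range_succ
    (fun i j => (N.choose i : ℝ) * (rfac a h i * rfac b h j))]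
  simp only [mul_assoc]

lemma sum_choose_mul_rfac_mul_rfac_mul_falling (h b : ℝ) (r N : ℕ) (a : ℝ) :
    ∑ k ∈ range (N + 1), (N.choose k : ℝ) * rfac a h k * rfac b h (N - k) * rfac k (-1) r =
      rfac N (-1) r * rfac a h r * rfac (a + b + r * h) h (N - r) := by
  induction r generalizing N a with
  | zero => simp [rfac_zero, sum_choose_mul_rfac_mul_rfac]
  | succ r ih =>
    cases N with
    | zero => simp [rfac_succ']
    | succ M =>
      have hterm : ∀ j ∈ range (M + 1), ((M + 1).choose (j + 1) : ℝ) * rfac a h (j + 1) *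
          rfac b h (M + 1 - (j + 1)) * rfac ((j + 1 : ℕ) : ℝ) (-1) (r + 1) =
          ((M + 1) * a) *
            ((M.choose j : ℝ) * rfac (a + h) h j * rfac b h (M - j) * rfac j (-1) r) := by
        intro j _
        have hchoose : ((M + 1).choose (j + 1) : ℝ) * (j + 1) = (M + 1) * M.choose j := by
          exact_mod_cast (Nat.add_one_mul_choose_eq M j).symm
        rw [rfac_succ' a, rfac_succ', Nat.add_sub_add_right, Nat.cast_succ, add_neg_cancel_right]
        linear_combination (a * rfac (a + h) h j * rfac b h (M - j) * rfac j (-1) r) * hchoose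
      rw [sum_range_succ', sum_congr rfl hterm, ← mul_sum, ih, rfac_succ', rfac_succ' a]
      simp only [Nat.cast_zero, zero_mul, rfac_succ', Nat.cast_succ, add_neg_cancel_right, mul_zero,
        add_zero, Nat.add_sub_add_right]
      rw [show a + b + (r + 1) * h = a + h + b + r * h by ring]
      ring

lemma sub_pow_four_eq_falling (y t : ℝ) :
    (y - t) ^ 4 = rfac y (-1) 4 + (6 - 4 * t) * rfac y (-1) 3 +
      (7 - 12 * t + 6 * t ^ 2) * rfac y (-1) 2 +
      (1 - 4 * t + 6 * t ^ 2 - 4 * t ^ 3) * rfac y (-1) 1 + t ^ 4 := by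
  simp only [rfac, prod_range_succ, prod_range_zero]
  push_cast
  ring

lemma sum_mul_sub_pow_four (s : Finset ℕ) (p : ℕ → ℝ) (t : ℝ) :
    ∑ k ∈ s, p k * ((k : ℝ) - t) ^ 4 = ∑ k ∈ s, p k * rfac k (-1) 4 +
      (6 - 4 * t) * ∑ k ∈ s, p k * rfac k (-1) 3 +
      (7 - 12 * t + 6 * t ^ 2) * ∑ k ∈ s, p k * rfac k (-1) 2 +
      (1 - 4 * t + 6 * t ^ 2 - 4 * t ^ 3) * ∑ k ∈ s, p k * rfac k (-1) 1 +
      t ^ 4 * ∑ k ∈ s, p k := by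
  simp only [mul_sum, ← sum_add_distrib, sub_pow_four_eq_falling]
  exact sum_congr rfl fun _ _ => by ring

lemma sum_mul_sub_pow_four_le (p : ℕ → ℝ) (n : ℕ) (t : ℝ)
    (hp : ∀ k ∈ range (n + 1), 0 ≤ p k) (hp1 : ∑ k ∈ range (n + 1), p k = 1)
    (ht : 0 ≤ t) (htn : t ≤ n) :
    ∑ k ∈ range (n + 1), p k * ((k : ℝ) - t) ^ 4 ≤ (n : ℝ) ^ 4 := by
  calc _ ≤ ∑ k ∈ range (n + 1), p k * (n : ℝ) ^ 4 := by
        refine sum_le_sum fun k hk => mul_le_mul_of_nonneg_left ?_ (hp k hk)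
        have hkn : (k : ℝ) ≤ n := by exact_mod_cast Nat.lt_succ_iff.1 (mem_range.1 hk)
        have hdist : |(k : ℝ) - t| ≤ n :=
          abs_sub_le_iff.2 ⟨by linarith, by linarith [k.cast_nonneg (α := ℝ)]⟩
        rw [← Even.pow_abs ⟨2, rfl⟩]
        exact pow_le_pow_left₀ (abs_nonneg _) hdist 4
    _ = n ^ 4 := by rw [← sum_mul, hp1, one_mul]

section Polya

variable (a b c : ℝ) (n : ℕ)

lemma sum_polyaProb_mul_falling (h : rfac (a + b) c n ≠ 0) (r : ℕ) :
    ∑ k ∈ range (n + 1), polyaProb a b c n k * rfac k (-1) r =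
      rfac n (-1) r * rfac a c r / rfac (a + b) c r := by
  simp only [polyaProb, div_mul_eq_mul_div, ← sum_div, sum_choose_mul_rfac_mul_rfac_mul_falling]
  rcases le_or_gt r n with hr | hr
  · obtain ⟨j, rfl⟩ := Nat.exists_eq_add_of_le hr
    rw [rfac_add] at h ⊢
    rw [Nat.add_sub_cancel_left, mul_div_mul_right _ _ (right_ne_zero_of_mul h)]
  · simp [rfac_neg_one_eq_zero hr]

lemma sum_polyaProb (h : rfac (a + b) c n ≠ 0) :
    ∑ k ∈ range (n + 1), polyaProb a b c n k = 1 := by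
  simpa [rfac_zero] using sum_polyaProb_mul_falling a b c n h 0

lemma polyaProb_nonneg {k : ℕ} (hk : k ≤ n) (ha : ∀ i < n, 0 ≤ a + i * c)
    (hb : ∀ i < n, 0 ≤ b + i * c) (hab : 0 ≤ rfac (a + b) c n) :
    0 ≤ polyaProb a b c n k := by
  refine div_nonneg (mul_nonneg (mul_nonneg (Nat.cast_nonneg _) ?_) ?_) hab
  · exact prod_nonneg fun i hi => ha i (by simp only [mem_range] at hi; omega)
  · exact prod_nonneg fun i hi => hb i (by simp only [mem_range] at hi; omega)

end Polya

lemma natCast_mul_le_mul_sub_one {i n : ℕ} {e : ℝ} (he : 0 ≤ e) (hi : i < n) :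
    (i : ℝ) * e ≤ e * (n - 1) := by
  have : (i : ℝ) + 1 ≤ n := by exact_mod_cast hi
  nlinarith

lemma rfac_one_neg_pos (n : ℕ) (x e : ℝ) (he : 0 ≤ e) (hx : e * (n - 1) ≤ x)
    (hx' : e * (n - 1) ≤ 1 - x) : 0 < rfac 1 (-e) n :=
  prod_pos fun i hi => by
    have := natCast_mul_le_mul_sub_one he (mem_range.1 hi)
    linarith

lemma sum_polyaProb_mul_sub_pow_four_le_pow_four {n : ℕ} (hn : 0 < n) (x e : ℝ) (he : 0 ≤ e)
    (hx : e * (n - 1) ≤ x) (hx' : e * (n - 1) ≤ 1 - x) :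
    ∑ k ∈ range (n + 1), polyaProb x (1 - x) (-e) n k * ((k : ℝ) - n * x) ^ 4 ≤
      (n : ℝ) ^ 4 := by
  have hD := rfac_one_neg_pos n x e he hx hx'
  rw [← add_sub_cancel x 1] at hD
  have hfactor : ∀ y, e * (n - 1) ≤ y → ∀ i < n, 0 ≤ y + i * -e := fun y hy i hi => by
    have := natCast_mul_le_mul_sub_one he hi
    linarith
  have hn : (1 : ℝ) ≤ n := by exact_mod_cast hn
  have hx0 : 0 ≤ x := by nlinarith
  have hx1 : x ≤ 1 := by nlinarith
  refine sum_mul_sub_pow_four_le _ n _ (fun k hk => ?_) (sum_polyaProb _ _ _ _ hD.ne')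
    (by nlinarith) (by nlinarith)
  exact polyaProb_nonneg _ _ _ _ (Nat.lt_succ_iff.1 (mem_range.1 hk)) (hfactor x hx)
    (hfactor (1 - x) hx') hD.le

noncomputable def hypergeomFourthMoment (n x e : ℝ) : ℝ :=
  n * (x * (1 - x)) * (1 - n * e) * (1 + e - 6 * (n * e) * (1 - n * e) +
      3 * (x * (1 - x)) * (n - 2 - n ^ 2 * e + 6 * (n * e) * (1 - n * e))) /
    ((1 - e) * (1 - 2 * e) * (1 - 3 * e))

lemma sum_polyaProb_mul_sub_pow_four (n : ℕ) (x e : ℝ) (hD : rfac 1 (-e) n ≠ 0)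
    (h1 : 1 - e ≠ 0) (h2 : 1 - 2 * e ≠ 0) (h3 : 1 - 3 * e ≠ 0) :
    ∑ k ∈ range (n + 1), polyaProb x (1 - x) (-e) n k * ((k : ℝ) - n * x) ^ 4 =
      hypergeomFourthMoment n x e := by
  rw [← add_sub_cancel x 1] at hD
  rw [sum_mul_sub_pow_four, sum_polyaProb _ _ _ _ hD]
  simp only [sum_polyaProb_mul_falling _ _ _ _ hD]
  simp only [hypergeomFourthMoment, add_sub_cancel, rfac, prod_range_succ, prod_range_zero,
    Nat.cast_ofNat, Nat.cast_zero, Nat.cast_one, zero_mul, one_mul, mul_one, mul_neg,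
    ← sub_eq_add_neg]
  field_simp
  ring

lemma hypergeomFourthMoment_le (n x e : ℝ) (hn : 3 ≤ n) (he : 0 ≤ e) (hx : e * (n - 1) ≤ x)
    (hx' : e * (n - 1) ≤ 1 - x) : hypergeomFourthMoment n x e ≤ 8 * n ^ 2 := by
  rw [hypergeomFourthMoment]
  have hen : 0 ≤ e * (n - 1) := mul_nonneg he (by linarith)
  have he4 : e ≤ 1 / 4 := by nlinarith
  have hs0 : 0 ≤ x * (1 - x) := mul_nonneg (by linarith) (by linarith)
  have hs : x * (1 - x) ≤ 1 / 4 := by nlinarith [sq_nonneg (x - 1 / 2)]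
  have hu0 : 0 ≤ n * e := mul_nonneg (by linarith) he
  have hu1 : n * e ≤ 1 := by nlinarith
  have hD : 3 / 32 ≤ (1 - e) * (1 - 2 * e) * (1 - 3 * e) := by
    have h12 : 3 / 8 ≤ (1 - e) * (1 - 2 * e) := by nlinarith
    nlinarith
  have hmix : 0 ≤ 6 * (n * e) * (1 - n * e) ∧ 6 * (n * e) * (1 - n * e) ≤ 3 / 2 := by
    constructor <;> nlinarith [sq_nonneg (n * e - 1 / 2)]
  have hF : 3 * (x * (1 - x)) * (n - 2 - n ^ 2 * e + 6 * (n * e) * (1 - n * e)) ≤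
      3 / 4 * (n - 1 / 2) := by
    have hnu : 0 ≤ n ^ 2 * e := by nlinarith
    calc _ ≤ 3 * (x * (1 - x)) * (n - 1 / 2) := by gcongr; linarith
      _ ≤ 3 / 4 * (n - 1 / 2) := by nlinarith
  have hB : 1 + e - 6 * (n * e) * (1 - n * e) +
      3 * (x * (1 - x)) * (n - 2 - n ^ 2 * e + 6 * (n * e) * (1 - n * e)) ≤ 3 * n := by linarith
  have hA : 0 ≤ n * (x * (1 - x)) * (1 - n * e) := mul_nonneg (by positivity) (by linarith)
  have hA' : n * (x * (1 - x)) * (1 - n * e) ≤ n / 4 := by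
    nlinarith [mul_nonneg (mul_nonneg (by linarith : (0 : ℝ) ≤ n) hs0) hu0]
  rw [div_le_iff₀ (by linarith)]
  calc _ ≤ n * (x * (1 - x)) * (1 - n * e) * (3 * n) := mul_le_mul_of_nonneg_left hB hA
    _ ≤ n / 4 * (3 * n) := by gcongr
    _ ≤ 8 * n ^ 2 * ((1 - e) * (1 - 2 * e) * (1 - 3 * e)) := by nlinarith

theorem polya_mu4_bound :
    ∃ K : ℝ, ∀ n : ℕ, 1 < n → ∀ x ∈ Set.Icc (0 : ℝ) 1,
      ∑ k ∈ Finset.range (n + 1),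
          polyaProb x (1 - x) (-(min x (1 - x)) / ((n : ℝ) - 1)) n k *
            ((k : ℝ) - n * x) ^ 4
        ≤ K * (n : ℝ) ^ 2 := by
  refine ⟨8, fun n hn x hx => ?_⟩
  have hn1 : (1 : ℝ) < n := by exact_mod_cast hn
  rw [neg_div]
  set e := min x (1 - x) / ((n : ℝ) - 1)
  have he : 0 ≤ e := div_nonneg (le_min hx.1 (by linarith [hx.2])) (by linarith)
  have hmin : e * (n - 1) = min x (1 - x) := div_mul_cancel₀ _ (by linarith)
  have hx1 : e * (n - 1) ≤ x := hmin ▸ min_le_left _ _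
  have hx2 : e * (n - 1) ≤ 1 - x := hmin ▸ min_le_right _ _
  rcases Nat.lt_or_ge n 3 with hn3 | hn3
  · have hn2 : (n : ℝ) ^ 2 ≤ 8 := by
      have : (n : ℝ) ≤ 2 := by exact_mod_cast Nat.lt_succ_iff.1 hn3
      nlinarith
    calc _ ≤ (n : ℝ) ^ 4 := sum_polyaProb_mul_sub_pow_four_le_pow_four (by omega) x e he hx1 hx2
      _ ≤ 8 * n ^ 2 := by nlinarith [sq_nonneg (n : ℝ)]
  · have hn3' : (3 : ℝ) ≤ n := by exact_mod_cast hn3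
    have he4 : e ≤ 1 / 4 := by nlinarith
    rw [sum_polyaProb_mul_sub_pow_four n x e (rfac_one_neg_pos n x e he hx1 hx2).ne'
      (by linarith) (by linarith) (by linarith)]
    exact hypergeomFourthMoment_le n x e hn3' he hx1 hx2
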